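/- For fixed l and α > 1 with α·l never an integer, the overlap probabilities from a sudden box expansion sum to one: ∑_{k=1}^∞ b_{kl}² = 1, where b_{kl} = 2lα^{3/2}(−1)^l sin(kπ/α)/(π(k² − α²l²)). -/

import Mathlib

/-!
`b_{kl}` is the overlap of the initial state `√2 sin (lπx)` on `[0, 1]` with the eigenfunction
`√(2/α) sin (kπx/α)` of the expanded box `[0, α]`, so the claim is completeness of that sine basis.
It follows from Parseval's identity for the odd extension: the function equal to `sin (lπx)` on
`[-1, 1]` and to `0` on the rest of `[-α, α]` has `n`-th Fourier coefficient `i c_n` with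
`c_n = (-1)^l l α sin (nπ/α) / (π (α²l² - n²))` (irrationality of `α` keeps the denominators
nonzero), so `∑_{n ∈ ℤ} c_n² = (2α)⁻¹ ∫ sin² (lπx) = 1/(2α)`. As `c` is odd with `c_0 = 0` and
`b_{kl}² = 4α c_k²`, the sum over `k ≥ 1` is `1`.
-/

open Real Complex MeasureTheory Set

lemma integral_cexp_ofReal_mul_I {ω : ℝ} (hω : ω ≠ 0) :
    ∫ x in (-1:ℝ)..1, cexp (ω * x * I) = ((2 * Real.sin ω / ω : ℝ) : ℂ) := by
  have hωI : (ω : ℂ) * I ≠ 0 := mul_ne_zero (ofReal_ne_zero.mpr hω) I_ne_zero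
  simp_rw [mul_right_comm (ω : ℂ) _ I]
  rw [integral_exp_mul_complex hωI]
  push_cast
  rw [Complex.sin]
  field_simp
  ring_nf
  rw [I_sq]
  ring

lemma integral_cexp_mul_sin {b c : ℝ} (h₁ : b - c ≠ 0) (h₂ : b + c ≠ 0) :
    ∫ x in (-1:ℝ)..1, cexp (-(c * x * I)) * (Real.sin (b * x) : ℂ) =
      I * ((Real.sin (b + c) / (b + c) - Real.sin (b - c) / (b - c) : ℝ) : ℂ) := by
  have hsplit : ∀ x : ℝ, cexp (-(c * x * I)) * (Real.sin (b * x) : ℂ) =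
      (I / 2) * (cexp (↑(-(b + c)) * x * I) - cexp (↑(b - c) * x * I)) := by
    intro x
    rw [ofReal_sin, Complex.sin,
      show (↑(-(b + c)) * x * I : ℂ) = -(c * x * I) + -↑(b * x) * I by push_cast; ring,
      show (↑(b - c) * x * I : ℂ) = -(c * x * I) + ↑(b * x) * I by push_cast; ring,
      Complex.exp_add, Complex.exp_add]
    ring
  have hint : ∀ ω : ℝ, IntervalIntegrable (fun x : ℝ => cexp (ω * x * I)) volume (-1) 1 :=
    fun ω => by apply Continuous.intervalIntegrable; fun_prop
  simp_rw [hsplit]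
  rw [intervalIntegral.integral_const_mul, intervalIntegral.integral_sub (hint _) (hint _),
    integral_cexp_ofReal_mul_I (neg_ne_zero.mpr h₂), integral_cexp_ofReal_mul_I h₁,
    Real.sin_neg, mul_neg, neg_div_neg_eq]
  push_cast
  ring

lemma intervalIntegral_indicator_Ioc {E : Type*} [NormedAddCommGroup E] [NormedSpace ℝ E]
    {a b c d : ℝ} (hac : a ≤ c) (hcd : c ≤ d) (hdb : d ≤ b) (f : ℝ → E) :
    ∫ x in a..b, (Ioc c d).indicator f x = ∫ x in c..d, f x := by
  rw [intervalIntegral.integral_of_le (hac.trans (hcd.trans hdb)),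
    setIntegral_indicator measurableSet_Ioc,
    inter_eq_right.mpr (Ioc_subset_Ioc hac hdb), intervalIntegral.integral_of_le hcd]

lemma integral_sin_nat_mul_pi_sq {l : ℕ} (hl : l ≠ 0) :
    ∫ x in (-1:ℝ)..1, Real.sin (l * π * x) ^ 2 = 1 := by
  have hlπ : (l : ℝ) * π ≠ 0 := by positivity
  rw [intervalIntegral.integral_comp_mul_left (fun y => Real.sin y ^ 2) hlπ, integral_sin_sq,
    mul_neg_one, mul_one, Real.sin_neg, Real.sin_nat_mul_pi, smul_eq_mul]
  field_simp
  ring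

lemma Irrational.sq_mul_natCast_sq_ne_intCast_sq {α : ℝ} (h : Irrational α) {l : ℕ} (hl : l ≠ 0)
    (n : ℤ) : α ^ 2 * l ^ 2 ≠ n ^ 2 := by
  rw [← mul_pow]
  intro hsq
  rcases sq_eq_sq_iff_eq_or_eq_neg.mp hsq with h' | h'
  · exact (h.mul_natCast hl).ne_int n h'
  · exact (h.mul_natCast hl).ne_int (-n) (by push_cast; exact h')

lemma HasSum.nat_add_one_of_even {f : ℤ → ℝ} {s : ℝ} (h : HasSum f s) (hf : f.Even)
    (h₀ : f 0 = 0) : HasSum (fun n : ℕ => f (n + 1)) (s / 2) := by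
  have hsum : Summable fun n : ℕ => f (n + 1) :=
    h.summable.comp_injective fun a b hab => by simpa using hab
  rw [hsum.hasSum_iff, ← h.tsum_eq, tsum_int_eq_zero_add_two_mul_tsum_pnat hf h.summable, h₀,
    tsum_pnat_eq_tsum_succ (f := fun n : ℕ => f n)]
  push_cast
  ring

noncomputable def boxMode (l : ℕ) : ℝ → ℂ :=
  (Ioc (-1) 1).indicator fun x => (Real.sin (l * π * x) : ℂ)

lemma norm_boxMode_le_one (l : ℕ) (x : ℝ) : ‖boxMode l x‖ ≤ 1 := by
  unfold boxMode indicator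
  split_ifs
  · rw [norm_real, norm_eq_abs]
    exact abs_sin_le_one _
  · simp

lemma norm_boxMode_sq (l : ℕ) : (fun x => ‖boxMode l x‖ ^ 2) =
      (Ioc (-1) 1).indicator fun x => Real.sin (l * π * x) ^ 2 := by
  rw [boxMode, ← Function.comp_def (fun z : ℂ => ‖z‖ ^ 2), ← indicator_comp_of_zero (by simp)]
  simp only [Function.comp_def, norm_real, norm_eq_abs, sq_abs]

lemma memLp_boxMode (l : ℕ) (μ : Measure ℝ) [IsFiniteMeasure μ] : MemLp (boxMode l) 2 μ :=
  MemLp.of_bound ((by fun_prop : Continuous fun x : ℝ => (Real.sin (l * π * x) : ℂ)).measurable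
    |>.indicator measurableSet_Ioc |>.aestronglyMeasurable) 1 (ae_of_all _ (norm_boxMode_le_one l))

lemma integral_norm_boxMode_sq {l : ℕ} (hl : l ≠ 0) {a b : ℝ} (ha : a ≤ -1) (hb : 1 ≤ b) :
    ∫ x in a..b, ‖boxMode l x‖ ^ 2 = 1 := by
  rw [norm_boxMode_sq, intervalIntegral_indicator_Ioc ha (by norm_num) hb,
    integral_sin_nat_mul_pi_sq hl]

noncomputable def boxModeCoeff (α : ℝ) (l : ℕ) (m : ℝ) : ℝ :=
  (-1) ^ l * l * α * Real.sin (m * π / α) / (π * (α ^ 2 * l ^ 2 - m ^ 2))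

lemma fourierCoeffOn_boxMode {α : ℝ} (hα : 1 ≤ α) (l : ℕ) {n : ℤ} (hn : α ^ 2 * l ^ 2 ≠ n ^ 2) :
    fourierCoeffOn (by linarith : -α < α) (boxMode l) n = I * boxModeCoeff α l n := by
  have hα₀ : α ≠ 0 := by positivity
  have hsub : α * l - n ≠ 0 := fun h => hn (by linear_combination (α * l + n) * h)
  have hadd : α * l + n ≠ 0 := fun h => hn (by linear_combination (α * l - n) * h)
  set b : ℝ := l * π
  set c : ℝ := n * π / α
  have hb_sub_c : b - c = π / α * (α * l - n) := by simp only [b, c]; field_simp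
  have hb_add_c : b + c = π / α * (α * l + n) := by simp only [b, c]; field_simp
  have hintegrand : ∀ x : ℝ, fourier (-n) (x : AddCircle (α - -α)) • boxMode l x =
      (Ioc (-1 : ℝ) 1).indicator (fun x : ℝ => cexp (-(c * x * I)) * (Real.sin (b * x) : ℂ)) x := by
    intro x
    by_cases hx : x ∈ Ioc (-1 : ℝ) 1
    · rw [boxMode, indicator_of_mem hx, indicator_of_mem hx, fourier_coe_apply, smul_eq_mul]
      congr 2
      simp only [c]
      push_cast
      field_simp
      ring
    · rw [boxMode, indicator_of_notMem hx, indicator_of_notMem hx, smul_zero]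
  rw [fourierCoeffOn_eq_integral, intervalIntegral.integral_congr fun x _ => hintegrand x,
    intervalIntegral_indicator_Ioc (by linarith) (by norm_num) hα,
    integral_cexp_mul_sin (hb_sub_c ▸ mul_ne_zero (by positivity) hsub)
      (hb_add_c ▸ mul_ne_zero (by positivity) hadd),
    add_comm b c, Real.sin_add_nat_mul_pi, Real.sin_nat_mul_pi_sub, real_smul, mul_left_comm,
    ← ofReal_mul, add_comm c b, hb_sub_c, hb_add_c]
  congr 2
  simp only [boxModeCoeff, c]
  field_simp
  ring

lemma boxModeCoeff_neg (α : ℝ) (l : ℕ) (m : ℝ) : boxModeCoeff α l (-m) = -boxModeCoeff α l m := by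
  simp only [boxModeCoeff, neg_mul, neg_div, Real.sin_neg, neg_sq]
  ring

lemma boxModeCoeff_zero (α : ℝ) (l : ℕ) : boxModeCoeff α l 0 = 0 := by
  simp [boxModeCoeff]

lemma sq_eq_four_mul_boxModeCoeff_sq {α : ℝ} (hα : 0 ≤ α) (l : ℕ) (m : ℝ) :
    (2 * l * α ^ ((3 : ℝ) / 2) * (-1 : ℝ) ^ l / (π * (m ^ 2 - α ^ 2 * l ^ 2)) *
      Real.sin (m * π / α)) ^ 2 = 4 * α * boxModeCoeff α l m ^ 2 := by
  have h32 : (α ^ ((3 : ℝ) / 2)) ^ 2 = α ^ 3 := by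
    rw [← rpow_natCast, ← rpow_mul hα]
    norm_num
  rw [boxModeCoeff, show m ^ 2 - α ^ 2 * l ^ 2 = -(α ^ 2 * l ^ 2 - m ^ 2) by ring]
  simp only [div_pow, mul_pow, neg_sq, h32]
  ring

lemma hasSum_boxModeCoeff_sq {α : ℝ} (hα : 1 ≤ α) {l : ℕ} (hl : l ≠ 0)
    (hden : ∀ n : ℤ, α ^ 2 * l ^ 2 ≠ n ^ 2) :
    HasSum (fun n : ℤ => boxModeCoeff α l n ^ 2) (1 / (2 * α)) := by
  have h := hasSum_sq_fourierCoeffOn (by linarith : -α < α) (memLp_boxMode l _)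
  rw [integral_norm_boxMode_sq hl (by linarith) hα] at h
  convert h using 1
  · ext n
    rw [fourierCoeffOn_boxMode hα l (hden n), norm_mul, norm_I, one_mul, norm_real, norm_eq_abs,
      sq_abs]
  · simp only [smul_eq_mul, mul_one]
    ring

theorem sudden_expansion_unitarity (l : ℕ) (hl : 1 ≤ l) (alpha : ℝ)
    (halpha : 1 < alpha) (hirr : Irrational alpha) :
    ∑' k : ℕ,
        (2 * l * alpha ^ ((3:ℝ)/2) * (-1 : ℝ) ^ l /
          (Real.pi * (((k + 1 : ℕ) : ℝ)^2 - alpha^2 * (l:ℝ)^2)) *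
          Real.sin ((k + 1 : ℕ) * Real.pi / alpha)) ^ 2 = 1 := by
  have hl₀ : l ≠ 0 := by omega
  have hα : 0 < alpha := by linarith
  have parseval := hasSum_boxModeCoeff_sq halpha.le hl₀ (hirr.sq_mul_natCast_sq_ne_intCast_sq hl₀)
  have half := parseval.nat_add_one_of_even
    (fun n => by push_cast; rw [boxModeCoeff_neg, neg_sq])
    (by simp only [Int.cast_zero, boxModeCoeff_zero, sq, mul_zero])
  simp_rw [sq_eq_four_mul_boxModeCoeff_sq hα.le]
  push_cast at half ⊢
  rw [tsum_mul_left, half.tsum_eq]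
  field_simp
  norm_num
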